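/- Let h : 𝒫_X → 𝒫_Y be a homomorphism of 𝒫-structures, let j : V → M be the induced elementary embedding into the transitive collapse of the term model (j(p) = ⟦0,⟨⟩,c_p⟧), and assume Łoś's theorem and the identification y = ⟦1,⟨y⟩,π⟧ for y ∈ Y. Then for all A ⊆ X^{<ω}, h(A) = j(A) ∩ Y^{<ω}; moreover Y^{<ω} ⊆ j(X^{<ω}) and Y ⊆ j(X). -/

import Mathlib

/-!
Apply Łoś's theorem to the formula `⟨v₁,…,v_k⟩ ∈ v_{k+1}` at the terms `⟦1,⟨yᵢ⟩,π⟧`, which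
collapse to `yᵢ`, and `⟦0,⟨⟩,c_A⟧`: the Łoś set is `A ∩ X^k`, so `(y₁,…,y_k) ∈ j(A)` iff
`(y₁,…,y_k) ∈ h(A ∩ X^k) = h(A) ∩ Y^k`. For `A = X^{<ω}` every tuple of `Y^k = h(X^k)` lies in
`h(A)`. Finally `y ∈ j(X)` because `⟦1,⟨y⟩,π⟧ ∈* ⟦0,⟨⟩,c_X⟧` reduces to `⟨y⟩ ∈ h(X¹) = Y¹`.
-/

namespace WVP

/-- `tup X k`: the set of `k`-tuples (as lists) of elements of the ZF-set `X`. -/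
def tup (X : ZFSet) (k : ℕ) : Set (List ZFSet) := {l | l.length = k ∧ ∀ z ∈ l, z ∈ X}

/-- `finTup X`: the set of all finite tuples from `X`, i.e. `X^{<ω}`. -/
def finTup (X : ZFSet) : Set (List ZFSet) := {l | ∀ z ∈ l, z ∈ X}

/-- `WFset A`: `A` is well-founded under the reverse of the proper-initial-segment
relation, i.e. there is no infinite chain `a₁ ⊊ a₂ ⊊ ⋯` of elements of `A`. -/
def WFset (A : Set (List ZFSet)) : Prop :=
  ¬ ∃ g : ℕ → List ZFSet, (∀ n, g n ∈ A) ∧ ∀ n, g n <+: g (n + 1) ∧ g n ≠ g (n + 1)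

/-- The coordinate projection `(x₁,…,x_k) ↦ (x_{i₁},…,x_{i_j})` (0-based indices). -/
def proj (is : List ℕ) (l : List ZFSet) : List ZFSet := is.map fun i => l.getD i ∅

/-- The inverse image operator `Proj⁻¹_{k,(i₁,…,i_j)}` of the coordinate projection
`proj is : X^k → X^j`, mapping subsets of `X^j` to subsets of `X^k`. -/
def ProjInv (X : ZFSet) (k : ℕ) (is : List ℕ) (A : Set (List ZFSet)) : Set (List ZFSet) :=
  {l | l ∈ tup X k ∧ proj is l ∈ A}

/-- The bounded projection operator `BP_k` on subsets of `X^{k+1}`: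
`BP_k(A) = {(x₁,…,x_{k+1}) ∈ X^{k+1} : ∃ z ∈ x_{k+1}, (x₁,…,x_k,z) ∈ A}`. -/
def BP (X : ZFSet) (k : ℕ) (A : Set (List ZFSet)) : Set (List ZFSet) :=
  {l | l ∈ tup X (k + 1) ∧ ∃ z, z ∈ l.getLastD ∅ ∧ l.dropLast ++ [z] ∈ A}

/-- A homomorphism of 𝒫-structures `𝒫_X → 𝒫_Y`: a Boolean algebra homomorphism
`𝒫(X^{<ω}) → 𝒫(Y^{<ω})` sending `X^k` to `Y^k`, preserving the well-foundedness
predicate `WF` (forward direction), and commuting with the inverse-projection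
operators `Proj⁻¹` and the bounded projection operators `BP_k`. -/
structure IsPHom (X Y : ZFSet) (h : Set (List ZFSet) → Set (List ZFSet)) : Prop where
  subset_finTup : ∀ A ⊆ finTup X, h A ⊆ finTup Y
  map_inter : ∀ A ⊆ finTup X, ∀ B ⊆ finTup X, h (A ∩ B) = h A ∩ h B
  map_compl : ∀ A ⊆ finTup X, h (finTup X \ A) = finTup Y \ h A
  map_const : ∀ k, h (tup X k) = tup Y k
  map_wf : ∀ A ⊆ finTup X, WFset A → WFset (h A)
  map_projInv : ∀ (j k : ℕ) (is : List ℕ), is.length = j → (∀ i ∈ is, i < k) →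
    ∀ A ⊆ tup X j, h (ProjInv X k is A) = ProjInv Y k is (h A)
  map_bp : ∀ (k : ℕ), ∀ A ⊆ tup X (k + 1), h (BP X k A) = BP Y k (h A)

/-- The term model `M*`: triples `(k, b, f)` with `b ∈ Y^k` and `f : X^k → V`
(represented as a total function on tuples, only its values on `X^k` matter). -/
structure MStar (X Y : ZFSet) where
  k : ℕ
  b : List ZFSet
  hb : b ∈ tup Y k
  f : List ZFSet → ZFSet

/-- The membership relation `∈*` of the term model:
`(k₁,b₁,f₁) ∈* (k₂,b₂,f₂)` iff `b₁b₂ ∈ h({a₁a₂ : f₁(a₁) ∈ f₂(a₂)})`. -/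
def memStar (X Y : ZFSet) (h : Set (List ZFSet) → Set (List ZFSet))
    (p q : MStar X Y) : Prop :=
  p.b ++ q.b ∈ h {l | ∃ a₁ ∈ tup X p.k, ∃ a₂ ∈ tup X q.k, l = a₁ ++ a₂ ∧ p.f a₁ ∈ q.f a₂}

/-- The equality relation `=*` of the term model:
`(k₁,b₁,f₁) =* (k₂,b₂,f₂)` iff `b₁b₂ ∈ h({a₁a₂ : f₁(a₁) = f₂(a₂)})`. -/
def eqStar (X Y : ZFSet) (h : Set (List ZFSet) → Set (List ZFSet))
    (p q : MStar X Y) : Prop :=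
  p.b ++ q.b ∈ h {l | ∃ a₁ ∈ tup X p.k, ∃ a₂ ∈ tup X q.k, l = a₁ ++ a₂ ∧ p.f a₁ = q.f a₂}

/-- "Łoś's theorem holds" for (the interpretations of) an `n`-ary formula, where `P`
is its interpretation in `V` and `Q` its interpretation in the term model `M*`:
for all `(k₁,b₁,f₁),…,(kₙ,bₙ,fₙ)` in `M*`,
`M* ⊨ φ[(k₁,b₁,f₁),…,(kₙ,bₙ,fₙ)]` iff `b₁⋯bₙ ∈ h({a₁⋯aₙ : V ⊨ φ[f₁(a₁),…,fₙ(aₙ)]})`. -/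
def LosHolds (X Y : ZFSet) (h : Set (List ZFSet) → Set (List ZFSet)) (n : ℕ)
    (P : (Fin n → ZFSet) → Prop) (Q : (Fin n → MStar X Y) → Prop) : Prop :=
  ∀ t : Fin n → MStar X Y,
    Q t ↔ (List.ofFn fun i => (t i).b).flatten ∈
      h {l | ∃ a : Fin n → List ZFSet, (∀ i, a i ∈ tup X (t i).k) ∧
        l = (List.ofFn a).flatten ∧ P fun i => (t i).f (a i)}

attribute [local instance] Classical.propDecidable

noncomputable instance (n : ℕ) (F : (Fin n → ZFSet) → ZFSet) : ZFSet.Definable n F :=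
  Classical.allZFSetDefinable F

/-- Coding of a finite tuple of ZF-sets as a single ZF-set, by iterated
Kuratowski pairing: `⟨⟩ ↦ ∅`, `(x, l) ↦ pair x (code l)`. -/
def listCode : List ZFSet → ZFSet
  | [] => ∅
  | x :: l => ZFSet.pair x (listCode l)

/-- The ZF-set `X^k` of (codes of) `k`-tuples from `X`. -/
def kTupZ (X : ZFSet) : ℕ → ZFSet
  | 0 => {∅}
  | k + 1 => ZFSet.sep (fun z => ∃ x ∈ X, ∃ t ∈ kTupZ X k, z = ZFSet.pair x t)
      (ZFSet.powerset (ZFSet.powerset (X ∪ kTupZ X k)))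

/-- The ZF-set `X^{<ω}` of (codes of) all finite tuples from `X`. -/
noncomputable def finTupZ (X : ZFSet) : ZFSet :=
  ZFSet.sUnion (ZFSet.range fun k : ℕ => kTupZ X k)

/-- The ZF-set coding a collection `A` of finite tuples from `X`. -/
noncomputable def codeZ (X : ZFSet) (A : Set (List ZFSet)) : ZFSet :=
  ZFSet.sep (fun z => ∃ l ∈ A, z = listCode l) (finTupZ X)

/-- The trivial projection `π : X¹ → X`, `π(⟨x⟩) = x`. -/
def piFun : List ZFSet → ZFSet := fun l => l.getD 0 ∅

/-- The map `j* : V → M*`, `p ↦ (0, ⟨⟩, c_p)`. -/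
def jStar (X Y : ZFSet) (p : ZFSet) : MStar X Y :=
  ⟨0, [], ⟨rfl, by simp⟩, fun _ => p⟩

theorem pair_ne_empty (x y : ZFSet) : ZFSet.pair x y ≠ ∅ := by
  intro hxy
  have hx : ({x} : ZFSet) ∈ ZFSet.pair x y := by simp [ZFSet.pair]
  simp [hxy] at hx

theorem listCode_injective : Function.Injective listCode
  | [], [], _ => rfl
  | [], _ :: _, hc => absurd hc.symm (pair_ne_empty _ _)
  | _ :: _, [], hc => absurd hc (pair_ne_empty _ _)
  | _ :: _, _ :: _, hc => by
    obtain ⟨rfl, hlm⟩ := ZFSet.pair_injective hc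
    rw [listCode_injective hlm]

theorem pair_mem_powerset_powerset {x y S : ZFSet} (hx : x ∈ S) (hy : y ∈ S) :
    ZFSet.pair x y ∈ S.powerset.powerset := by
  simp only [ZFSet.pair, ZFSet.mem_powerset, ZFSet.subset_def, ZFSet.mem_pair]
  rintro _ (rfl | rfl) z hz <;> aesop

theorem mem_kTupZ {X z : ZFSet} {k : ℕ} : z ∈ kTupZ X k ↔ ∃ l ∈ tup X k, z = listCode l := by
  induction k generalizing z with
  | zero =>
    simp only [kTupZ, ZFSet.mem_singleton, tup, List.length_eq_zero_iff]
    constructor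
    · rintro rfl
      exact ⟨[], ⟨rfl, by simp⟩, rfl⟩
    · rintro ⟨_, ⟨rfl, -⟩, rfl⟩
      rfl
  | succ k ih =>
    simp only [kTupZ, ZFSet.mem_sep, ih]
    constructor
    · rintro ⟨-, x, hx, _, ⟨m, ⟨hm, hmX⟩, rfl⟩, rfl⟩
      exact ⟨x :: m, ⟨by simp [hm], by simpa [hx] using hmX⟩, rfl⟩
    · rintro ⟨_ | ⟨x, m⟩, ⟨hlen, hlX⟩, rfl⟩
      · simp at hlen
      have hx : x ∈ X := hlX x List.mem_cons_self
      have hm : m ∈ tup X k := ⟨by simpa using hlen, fun z hz => hlX z (List.mem_cons_of_mem _ hz)⟩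
      refine ⟨?_, x, hx, _, ⟨m, hm, rfl⟩, rfl⟩
      exact pair_mem_powerset_powerset (ZFSet.mem_union.2 (.inl hx))
        (ZFSet.mem_union.2 (.inr (ih.2 ⟨m, hm, rfl⟩)))

theorem mem_finTupZ {X z : ZFSet} : z ∈ finTupZ X ↔ ∃ l ∈ finTup X, z = listCode l := by
  simp only [finTupZ, ZFSet.mem_sUnion, ZFSet.mem_range]
  constructor
  · rintro ⟨_, ⟨k, rfl⟩, hz⟩
    obtain ⟨l, ⟨-, hl⟩, rfl⟩ := mem_kTupZ.mp hz
    exact ⟨l, hl, rfl⟩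
  · rintro ⟨l, hl, rfl⟩
    exact ⟨_, ⟨l.length, rfl⟩, mem_kTupZ.mpr ⟨l, ⟨rfl, hl⟩, rfl⟩⟩

theorem listCode_mem_codeZ {X : ZFSet} {A : Set (List ZFSet)} (hA : A ⊆ finTup X)
    {l : List ZFSet} : listCode l ∈ codeZ X A ↔ l ∈ A := by
  simp only [codeZ, ZFSet.mem_sep]
  constructor
  · rintro ⟨-, m, hm, hlm⟩
    rwa [listCode_injective hlm]
  · intro hl
    exact ⟨mem_finTupZ.mpr ⟨l, hA hl, rfl⟩, l, hl, rfl⟩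

theorem codeZ_finTup (X : ZFSet) : codeZ X (finTup X) = finTupZ X := by
  ext z
  simp only [codeZ, ZFSet.mem_sep, and_iff_left_iff_imp]
  exact mem_finTupZ.mp

theorem tup_subset_finTup (X : ZFSet) (k : ℕ) : tup X k ⊆ finTup X :=
  fun _ hl => hl.2

theorem IsPHom.map_mono {X Y : ZFSet} {h : Set (List ZFSet) → Set (List ZFSet)}
    (hh : IsPHom X Y h) {A B : Set (List ZFSet)} (hA : A ⊆ finTup X) (hB : B ⊆ finTup X)
    (hAB : A ⊆ B) : h A ⊆ h B := by
  rw [← Set.inter_eq_left.mpr hAB, hh.map_inter A hA B hB]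
  exact Set.inter_subset_right

theorem IsPHom.finTup_subset_map_finTup {X Y : ZFSet} {h : Set (List ZFSet) → Set (List ZFSet)}
    (hh : IsPHom X Y h) : finTup Y ⊆ h (finTup X) := fun l hl =>
  hh.map_mono (tup_subset_finTup X l.length) subset_rfl (tup_subset_finTup X l.length)
    (hh.map_const l.length ▸ ⟨rfl, hl⟩)

theorem flatten_ofFn_singleton {α : Type*} {k : ℕ} (g : Fin k → α) :
    (List.ofFn fun i => [g i]).flatten = List.ofFn g := by
  induction k with
  | zero => rfl
  | succ k ih => simp [List.ofFn_succ, ih]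

theorem mem_tup_iff_exists_ofFn {X : ZFSet} {k : ℕ} {m : List ZFSet} :
    m ∈ tup X k ↔ ∃ x : Fin k → ZFSet, (∀ i, x i ∈ X) ∧ m = List.ofFn x := by
  constructor
  · rintro ⟨rfl, hmX⟩
    exact ⟨fun i => m[i], fun i => hmX _ (List.getElem_mem _), List.ofFn_getElem.symm⟩
  · rintro ⟨x, hxX, rfl⟩
    exact ⟨List.length_ofFn, by simpa [List.mem_ofFn] using hxX⟩

theorem mem_tup_one {X : ZFSet} {m : List ZFSet} : m ∈ tup X 1 ↔ ∃ x ∈ X, m = [x] := by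
  constructor
  · rintro ⟨hlen, hmX⟩
    obtain ⟨x, rfl⟩ := List.length_eq_one_iff.1 hlen
    exact ⟨x, hmX x List.mem_cons_self, rfl⟩
  · rintro ⟨x, hx, rfl⟩
    exact ⟨rfl, by simpa using hx⟩

section TermModel

variable {X Y : ZFSet}

/-- The term `⟦1, ⟨y⟩, π⟧`. -/
def piTerm {y : ZFSet} (hy : y ∈ Y) : MStar X Y :=
  ⟨1, [y], ⟨rfl, by simpa using hy⟩, piFun⟩

/-- `(⟦1,⟨y₁⟩,π⟧, …, ⟦1,⟨y_k⟩,π⟧, q)` for `l = (y₁,…,y_k)`. -/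
def losTuple (q : MStar X Y) (l : List ZFSet) (hl : l ∈ finTup Y) :
    Fin (l.length + 1) → MStar X Y :=
  Fin.lastCases q fun i => piTerm (hl _ (l.getElem_mem i.isLt))

@[simp]
theorem losTuple_last (q : MStar X Y) (l : List ZFSet) (hl : l ∈ finTup Y) :
    losTuple q l hl (Fin.last _) = q :=
  Fin.lastCases_last

@[simp]
theorem losTuple_castSucc (q : MStar X Y) (l : List ZFSet) (hl : l ∈ finTup Y)
    (i : Fin l.length) : losTuple q l hl i.castSucc = piTerm (hl _ (l.getElem_mem i.isLt)) :=
  Fin.lastCases_castSucc _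

/-- The formula `⟨v₁,…,v_k⟩ ∈ v_{k+1}`. -/
def TupleMem {k : ℕ} (v : Fin (k + 1) → ZFSet) : Prop :=
  listCode (List.ofFn fun i : Fin k => v i.castSucc) ∈ v (Fin.last k)

/-- The set `{a₁⋯aₙ : V ⊨ φ[f₁(a₁),…,fₙ(aₙ)]}` occurring in Łoś's theorem. -/
def losSet {n : ℕ} (P : (Fin n → ZFSet) → Prop) (t : Fin n → MStar X Y) : Set (List ZFSet) :=
  {l | ∃ a : Fin n → List ZFSet, (∀ i, a i ∈ tup X (t i).k) ∧
    l = (List.ofFn a).flatten ∧ P fun i => (t i).f (a i)}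

theorem flatten_b_losTuple (q : MStar X Y) (l : List ZFSet) (hl : l ∈ finTup Y) :
    (List.ofFn fun i => (losTuple q l hl i).b).flatten = l ++ q.b := by
  rw [List.ofFn_succ']
  simp [piTerm, flatten_ofFn_singleton]

theorem tupleMem_coll_losTuple {coll : MStar X Y → ZFSet}
    (hPi : ∀ (y : ZFSet) (hy : y ∈ Y), coll (piTerm hy) = y)
    (q : MStar X Y) (l : List ZFSet) (hl : l ∈ finTup Y) :
    TupleMem (coll ∘ losTuple q l hl) ↔ listCode l ∈ coll q := by
  simp [TupleMem, hPi]

theorem losSet_tupleMem_losTuple_jStar (p : ZFSet) (l : List ZFSet) (hl : l ∈ finTup Y) :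
    losSet TupleMem (losTuple (jStar X Y p) l hl) = {m ∈ tup X l.length | listCode m ∈ p} := by
  ext m
  constructor
  · rintro ⟨a, ha, rfl, hP⟩
    have hone (i : Fin l.length) : ∃ x ∈ X, a i.castSucc = [x] :=
      mem_tup_one.1 (by simpa [piTerm] using ha i.castSucc)
    choose x hxX hx using hone
    have hlast : a (Fin.last _) = [] := by
      simpa [jStar, tup] using (ha (Fin.last _)).1
    have hflat : (List.ofFn a).flatten = List.ofFn x := by
      rw [List.ofFn_succ']
      simp [hx, hlast, flatten_ofFn_singleton]
    rw [hflat]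
    exact ⟨mem_tup_iff_exists_ofFn.2 ⟨x, hxX, rfl⟩,
      by simpa [TupleMem, hx, jStar, piFun, piTerm] using hP⟩
  · rintro ⟨hm, hp⟩
    obtain ⟨x, hxX, rfl⟩ := mem_tup_iff_exists_ofFn.1 hm
    refine ⟨Fin.lastCases [] fun i => [x i], fun i => ?_, ?_, ?_⟩
    · induction i using Fin.lastCases with
      | last => simp [jStar, tup]
      | cast i => simpa [piTerm] using mem_tup_one.2 ⟨x i, hxX i, rfl⟩
    · rw [List.ofFn_succ']
      simp [flatten_ofFn_singleton]
    · simpa [TupleMem, piTerm, jStar, piFun] using hp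

theorem memStar_piTerm_jStar_iff {h : Set (List ZFSet) → Set (List ZFSet)} {y : ZFSet}
    (hy : y ∈ Y) (p : ZFSet) :
    memStar X Y h (piTerm hy) (jStar X Y p) ↔ [y] ∈ h {m ∈ tup X 1 | piFun m ∈ p} := by
  have hset : {l | ∃ a₁ ∈ tup X 1, ∃ a₂ ∈ tup X 0, l = a₁ ++ a₂ ∧ piFun a₁ ∈ p} =
      {m ∈ tup X 1 | piFun m ∈ p} := by
    ext l
    constructor
    · rintro ⟨a₁, ha₁, a₂, ⟨ha₂, -⟩, rfl, hp⟩
      rw [List.length_eq_zero_iff.1 ha₂, List.append_nil]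
      exact ⟨ha₁, hp⟩
    · rintro ⟨hl, hp⟩
      exact ⟨l, hl, [], ⟨rfl, by simp⟩, (List.append_nil l).symm, hp⟩
  simp only [memStar, piTerm, jStar, List.append_nil]
  rw [hset]

theorem IsPHom.memStar_piTerm_jStar_self {h : Set (List ZFSet) → Set (List ZFSet)}
    (hh : IsPHom X Y h) {y : ZFSet} (hy : y ∈ Y) : memStar X Y h (piTerm hy) (jStar X Y X) := by
  have hset : {m ∈ tup X 1 | piFun m ∈ X} = tup X 1 :=
    Set.sep_eq_self_iff_mem_true.2 fun m hm => by
      obtain ⟨x, hx, rfl⟩ := mem_tup_one.1 hm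
      exact hx
  rw [memStar_piTerm_jStar_iff, hset, hh.map_const]
  exact mem_tup_one.2 ⟨y, hy, rfl⟩

theorem mem_map_iff_listCode_mem_coll_jStar {h : Set (List ZFSet) → Set (List ZFSet)}
    (hh : IsPHom X Y h) {coll : MStar X Y → ZFSet}
    (hPi : ∀ (y : ZFSet) (hy : y ∈ Y), coll (piTerm hy) = y)
    {A : Set (List ZFSet)} (hA : A ⊆ finTup X) {l : List ZFSet} (hl : l ∈ finTup Y)
    (hLosT : LosHolds X Y h (l.length + 1) TupleMem fun t => TupleMem (coll ∘ t)) :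
    l ∈ h A ↔ listCode l ∈ coll (jStar X Y (codeZ X A)) := by
  set t := losTuple (jStar X Y (codeZ X A)) l hl
  have hLos : TupleMem (coll ∘ t) ↔ _ ∈ h (losSet TupleMem t) := hLosT t
  have hcodeA : {m ∈ tup X l.length | listCode m ∈ codeZ X A} = A ∩ tup X l.length := by
    ext m
    simp [listCode_mem_codeZ hA, and_comm]
  rw [tupleMem_coll_losTuple hPi, flatten_b_losTuple, show (jStar X Y (codeZ X A)).b = [] from rfl,
    List.append_nil, losSet_tupleMem_losTuple_jStar, hcodeA,
    hh.map_inter A hA _ (tup_subset_finTup X _), hh.map_const] at hLos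
  exact ⟨fun hlA => hLos.2 ⟨hlA, rfl, hl⟩, fun hlj => (hLos.1 hlj).1⟩

end TermModel

/-- Let `h : 𝒫_X → 𝒫_Y` be a homomorphism of 𝒫-structures, let `coll` be the
Mostowski collapse of the term model, and let `j : V → M` be the induced elementary
embedding `j(p) = ⟦0,⟨⟩,c_p⟧ = coll (j* p)`. Assume Łoś's theorem (here, its
instances for the tuple-membership formulas `⟨v₁,…,v_k⟩ ∈ v_{k+1}`, in the collapsed
form) and the identification `y = ⟦1,⟨y⟩,π⟧` for `y ∈ Y`. Then for all
`A ⊆ X^{<ω}`, `h(A) = j(A) ∩ Y^{<ω}`; moreover `Y^{<ω} ⊆ j(X^{<ω})` and `Y ⊆ j(X)`.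
(Tuples are compared with ZF-sets via their Kuratowski codes: `A` corresponds to the
ZF-set `codeZ X A`, and `X^{<ω}` to `finTupZ X`.) -/
theorem derived_from_collapse (X Y : ZFSet)
    (h : Set (List ZFSet) → Set (List ZFSet)) (hh : IsPHom X Y h)
    (coll : MStar X Y → ZFSet)
    (hmem : ∀ p q : MStar X Y, coll p ∈ coll q ↔ memStar X Y h p q)
    (hPi : ∀ (y : ZFSet) (hy : y ∈ Y),
      coll ⟨1, [y], ⟨rfl, by intro z hz; rw [List.mem_singleton.mp hz]; exact hy⟩,
        piFun⟩ = y)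
    (hLosTuple : ∀ k : ℕ, LosHolds X Y h (k + 1)
      (fun v => listCode (List.ofFn fun i : Fin k => v i.castSucc) ∈ v (Fin.last k))
      (fun t => listCode (List.ofFn fun i : Fin k => coll (t i.castSucc)) ∈
        coll (t (Fin.last k)))) :
    (∀ A ⊆ finTup X, ∀ l ∈ finTup Y,
      (l ∈ h A ↔ listCode l ∈ coll (jStar X Y (codeZ X A)))) ∧
    (∀ l ∈ finTup Y, listCode l ∈ coll (jStar X Y (finTupZ X))) ∧
    ∀ y ∈ Y, y ∈ coll (jStar X Y X) := by
  have hmap : ∀ A ⊆ finTup X, ∀ l ∈ finTup Y,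
      (l ∈ h A ↔ listCode l ∈ coll (jStar X Y (codeZ X A))) := fun A hA l hl =>
    mem_map_iff_listCode_mem_coll_jStar hh hPi hA hl (hLosTuple l.length)
  refine ⟨hmap, fun l hl => ?_, fun y hy => ?_⟩
  · rw [← codeZ_finTup]
    exact (hmap _ subset_rfl l hl).1 (hh.finTup_subset_map_finTup hl)
  · rw [← hPi y hy]
    exact (hmem _ _).2 (hh.memStar_piTerm_jStar_self hy)

end WVP
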